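/- arXiv:1407.7264 — 3 statements merged into one kernel-verified Lean document; each statement's English description precedes it below -/
import Mathlib

section
/- The maps h₋₁(a) = a[ ], h₀(a𝟙_p[ ]) = a[p], and hₙ(a𝟙_{p₀}[p₁,…,pₙ]) = a[p₀,p₁,…,pₙ] define a contracting homotopy for the bar resolution: ∂₋₁h₋₁ = id on the module 𝔐, and ∂ₙhₙ + hₙ₋₁∂ₙ₋₁ = id on 𝔉ₙ for all n ≥ 0. In particular, the resolution is exact. -/
namespace BarResolution

variable {P : Type*} [Monoid P] {G : Type*} [CommGroup G]

/-- The coefficient ring `A = ℤG`. -/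
abbrev GrpAlg (G : Type*) [CommGroup G] := MonoidAlgebra ℤ G

/-- The skew product ring `𝔑 = ℤG ⋊_θ P`, as finitely supported functions `P →₀ ℤG`. -/
abbrev SkewRing (P G : Type*) [Monoid P] [CommGroup G] := P →₀ GrpAlg G

/-- The free left `𝔑`-module `𝔉ₙ` with basis `{[p₁,…,pₙ] : pᵢ ∈ P}`. -/
abbrev FreeMod (P G : Type*) [Monoid P] [CommGroup G] (n : ℕ) :=
  (Fin n → P) →₀ SkewRing P G

/-- The action of `θ_p` on `ℤG`. -/
noncomputable def thetaZ (θ : P →* Monoid.End G) (p : P) (a : GrpAlg G) : GrpAlg G :=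
  MonoidAlgebra.mapDomain (θ p) a

/-- The skew multiplication `(gp)(hq) = (g θ_p(h))(pq)`, extended bilinearly:
`(a𝟙_p)(b𝟙_q) = a θ_p(b) 𝟙_{pq}`. -/
noncomputable def skewMul (θ : P →* Monoid.End G) (x y : SkewRing P G) : SkewRing P G :=
  x.sum fun p a => y.sum fun q b => Finsupp.single (p * q) (a * thetaZ θ p b)

/-- The element `𝟙_p` of `𝔑`. -/
noncomputable def oneP (p : P) : SkewRing P G := Finsupp.single p 1

/-- The identity `1 = 𝟙_e` of `𝔑`. -/
noncomputable def oneN : SkewRing P G := Finsupp.single 1 1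

/-- The left `𝔑`-scalar action on the free module `𝔉ₙ` (left multiplication on
coefficients). -/
noncomputable def smulF (θ : P →* Monoid.End G) {n : ℕ} (r : SkewRing P G)
    (x : FreeMod P G n) : FreeMod P G n :=
  x.sum fun b s => Finsupp.single b (skewMul θ r s)

/-- The tuple `(p₁,…,pᵢpᵢ₊₁,…,pₙ₊₁)` obtained by merging the `i`-th and `(i+1)`-st
entries of `(p₁,…,pₙ₊₁)`. -/
def merge {n : ℕ} (p : Fin (n + 1) → P) (i : Fin n) : Fin n → P := fun j =>
  if (j : ℕ) < (i : ℕ) then p j.castSucc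
  else if (j : ℕ) = (i : ℕ) then p j.castSucc * p j.succ
  else p j.succ

/-- The value of the boundary map on a basis element:
`∂ₙ₋₁([p₁,…,pₙ₊₁]) = 𝟙_{p₁}[p₂,…,pₙ₊₁] + Σᵢ (−1)ⁱ [p₁,…,pᵢpᵢ₊₁,…,pₙ₊₁]
 + (−1)^{n+1} [p₁,…,pₙ]` (for `n = 0` this reads `∂₀([p]) = (𝟙_p − 1)[ ]`). -/
noncomputable def dBasis {n : ℕ} (p : Fin (n + 1) → P) : FreeMod P G n :=
  Finsupp.single (fun i => p i.succ) (oneP (p 0)) +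
    (∑ i : Fin n, ((-1 : ℤ) ^ ((i : ℕ) + 1)) • Finsupp.single (merge p i) oneN) +
    ((-1 : ℤ) ^ (n + 1)) • Finsupp.single (fun i => p i.castSucc) oneN

/-- The boundary map `∂ₙ : 𝔉ₙ₊₁ → 𝔉ₙ`, the `𝔑`-linear extension of `dBasis`. -/
noncomputable def bd (θ : P →* Monoid.End G) (n : ℕ) (x : FreeMod P G (n + 1)) :
    FreeMod P G n :=
  x.sum fun b r => smulF θ r (dBasis b)

/-- The map `Ψ : 𝔑 → ℤG`, `Ψ(Σ a_p 𝟙_p) = Σ a_p`. -/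
noncomputable def PsiZ (x : SkewRing P G) : GrpAlg G := x.sum fun _ a => a

/-- The augmentation `∂₋₁ : 𝔉₀ → 𝔐 = ℤG`, `∂₋₁(r[ ]) = r ⇀ 1 = Ψ(r)`. -/
noncomputable def bdNeg (x : FreeMod P G 0) : GrpAlg G := PsiZ (x fun i => i.elim0)

/-- The homotopy `h₋₁ : 𝔐 → 𝔉₀`, `h₋₁(a) = a[ ]`. -/
noncomputable def hNeg (a : GrpAlg G) : FreeMod P G 0 :=
  Finsupp.single (fun i => i.elim0) (Finsupp.single 1 a)

/-- The homotopy `hₙ : 𝔉ₙ → 𝔉ₙ₊₁`, `hₙ(a𝟙_{p₀}[p₁,…,pₙ]) = a[p₀,p₁,…,pₙ]`,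
extended additively. -/
noncomputable def hF {n : ℕ} (x : FreeMod P G n) : FreeMod P G (n + 1) :=
  x.sum fun b r => r.sum fun p a => Finsupp.single (Fin.cons p b) (Finsupp.single 1 a)

end BarResolution

/-!
Every map involved is additive, so both identities need only be checked on the generators
`a𝟙_p[b₁,…,bₙ]`, which `hₙ` sends to `a[p,b₁,…,bₙ]`. Since every `θ_q` fixes `1 ∈ ℤG`, the
first face of `a[p,b₁,…,bₙ]` is the generator itself; its second face `a[pb₁,b₂,…,bₙ]` and its
remaining faces `a[p, …]` are the images under `h` of the terms of `∂(a𝟙_p[b₁,…,bₙ])`, with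
opposite signs, so everything else cancels.
-/

namespace BarResolution

open Finsupp

variable {P : Type*} [Monoid P] {G : Type*} [CommGroup G] (θ : P →* Monoid.End G)

lemma thetaZ_eq_mapDomainRingHom (p : P) :
    thetaZ θ p = MonoidAlgebra.mapDomainRingHom ℤ (θ p) := rfl

lemma single_skewMul_single (p q : P) (a b : GrpAlg G) :
    skewMul θ (single p a) (single q b) = single (p * q) (a * thetaZ θ p b) := by
  simp [skewMul, thetaZ_eq_mapDomainRingHom]

lemma single_skewMul_oneP (p q : P) (a : GrpAlg G) :
    skewMul θ (single p a) (oneP q) = single (p * q) a := by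
  rw [oneP, single_skewMul_single, thetaZ_eq_mapDomainRingHom, map_one, mul_one]

lemma single_skewMul_oneN (p : P) (a : GrpAlg G) : skewMul θ (single p a) oneN = single p a := by
  rw [oneN, single_skewMul_single, thetaZ_eq_mapDomainRingHom, map_one, mul_one, mul_one]

lemma skewMul_add_left (x x' y : SkewRing P G) :
    skewMul θ (x + x') y = skewMul θ x y + skewMul θ x' y := by
  unfold skewMul
  rw [sum_add_index'] <;> simp [add_mul, single_add, sum_add]

lemma skewMul_add_right (x y y' : SkewRing P G) :
    skewMul θ x (y + y') = skewMul θ x y + skewMul θ x y' := by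
  unfold skewMul
  rw [← sum_add]
  refine sum_congr fun p _ => ?_
  rw [sum_add_index'] <;> simp [thetaZ_eq_mapDomainRingHom, mul_add, single_add]

lemma smulF_single {n : ℕ} (r : SkewRing P G) (c : Fin n → P) (s : SkewRing P G) :
    smulF θ r (single c s) = single c (skewMul θ r s) :=
  sum_single_index (by simp [skewMul])

lemma smulF_add_left {n : ℕ} (r r' : SkewRing P G) (x : FreeMod P G n) :
    smulF θ (r + r') x = smulF θ r x + smulF θ r' x := by
  simp only [smulF, skewMul_add_left, single_add, sum_add]

lemma smulF_add_right {n : ℕ} (r : SkewRing P G) (x y : FreeMod P G n) :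
    smulF θ r (x + y) = smulF θ r x + smulF θ r y :=
  sum_add_index' (by simp [skewMul]) (by simp [skewMul_add_right, single_add])

noncomputable def smulFHom {n : ℕ} (r : SkewRing P G) : FreeMod P G n →+ FreeMod P G n :=
  AddMonoidHom.mk' (smulF θ r) (smulF_add_right θ r)

lemma single_smulF_dBasis {n : ℕ} (p : P) (a : GrpAlg G) (b : Fin (n + 1) → P) :
    smulF θ (single p a) (dBasis b) =
      single (fun i => b i.succ) (single (p * b 0) a) +
        (∑ i : Fin n, (-1 : ℤ) ^ ((i : ℕ) + 1) • single (merge b i) (single p a)) +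
        (-1 : ℤ) ^ (n + 1) • single (fun i => b i.castSucc) (single p a) := by
  change smulFHom θ (single p a) (dBasis b) = _
  simp only [dBasis, map_add, map_sum, map_zsmul (smulFHom θ (single p a))]
  simp only [smulFHom, AddMonoidHom.mk'_apply, smulF_single, single_skewMul_oneP,
    single_skewMul_oneN]

lemma hF_single_single {n : ℕ} (b : Fin n → P) (p : P) (a : GrpAlg G) :
    hF (single b (single p a)) = single (Fin.cons p b) (single 1 a) := by
  rw [hF, sum_single_index, sum_single_index] <;> simp

lemma hF_add {n : ℕ} (x y : FreeMod P G n) : hF (x + y) = hF x + hF y :=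
  sum_add_index' (fun _ => sum_zero_index) fun _ _ _ =>
    sum_add_index' (by simp) (by simp [single_add])

noncomputable def hFHom {n : ℕ} : FreeMod P G n →+ FreeMod P G (n + 1) :=
  AddMonoidHom.mk' hF hF_add

lemma bd_single {n : ℕ} (b : Fin (n + 1) → P) (r : SkewRing P G) :
    bd θ n (single b r) = smulF θ r (dBasis b) :=
  sum_single_index (by simp [smulF, skewMul])

noncomputable def bdHom (n : ℕ) : FreeMod P G (n + 1) →+ FreeMod P G n :=
  AddMonoidHom.mk' (bd θ n) fun _ _ => by
    unfold bd
    exact sum_add_index' (fun _ => by simp [smulF, skewMul]) fun _ _ _ => smulF_add_left θ _ _ _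

noncomputable def hNegHom : GrpAlg G →+ FreeMod P G 0 :=
  AddMonoidHom.mk' hNeg fun _ _ => by simp only [hNeg, single_add]

noncomputable def bdNegHom : FreeMod P G 0 →+ GrpAlg G :=
  AddMonoidHom.mk' bdNeg fun _ _ => by
    simp only [bdNeg, PsiZ, Finsupp.add_apply]
    exact sum_add_index' (fun _ => rfl) fun _ _ _ => rfl

lemma init_cons {α : Type*} {n : ℕ} (p : α) (b : Fin (n + 1) → α) :
    (fun i : Fin (n + 1) => (Fin.cons p b : Fin (n + 2) → α) i.castSucc) =
      Fin.cons p (fun i : Fin n => b i.castSucc) := by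
  funext j
  induction j using Fin.cases with
  | zero => rfl
  | succ m => simp

lemma merge_cons_zero {n : ℕ} (p : P) (b : Fin (n + 1) → P) :
    merge (Fin.cons p b) 0 = Fin.cons (p * b 0) (fun i => b i.succ) := by
  funext j
  induction j using Fin.cases with
  | zero => simp [merge]
  | succ m => simp [merge]

lemma merge_cons_succ {n : ℕ} (p : P) (b : Fin (n + 1) → P) (k : Fin n) :
    merge (Fin.cons p b) k.succ = Fin.cons p (merge b k) := by
  funext j
  induction j using Fin.cases with
  | zero => simp [merge]
  | succ m => simp [merge]

lemma FreeMod.addHom_ext {n : ℕ} {N : Type*} [AddZeroClass N] {f g : FreeMod P G n →+ N}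
    (h : ∀ (b : Fin n → P) (p : P) (a : GrpAlg G),
      f (single b (single p a)) = g (single b (single p a))) :
    f = g := by
  refine Finsupp.addHom_ext' fun b => ?_
  exact Finsupp.addHom_ext (f := f.comp (singleAddHom b)) fun p a => h b p a

lemma bdNeg_hNeg (a : GrpAlg G) : bdNeg (hNeg (P := P) a) = a := by
  simp [bdNeg, hNeg, PsiZ]

lemma bd_hF_add_hNeg_bdNeg_single (b : Fin 0 → P) (p : P) (a : GrpAlg G) :
    bd θ 0 (hF (single b (single p a))) + hNeg (bdNeg (single b (single p a))) =
      single b (single p a) := by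
  obtain rfl : b = fun i => i.elim0 := Subsingleton.elim _ _
  have bdNeg_single : bdNeg (single (fun i => i.elim0) (single p a)) = a := by
    simp [bdNeg, PsiZ]
  rw [hF_single_single, bd_single, single_smulF_dBasis, bdNeg_single, hNeg]
  simp only [Subsingleton.elim (fun i : Fin 0 => _) (fun i : Fin 0 => i.elim0), Fin.cons_zero,
    one_mul, Finset.univ_eq_empty, Finset.sum_empty, add_zero, zero_add, pow_one]
  abel1

lemma bd_hF_add_hF_bd_single (n : ℕ) (b : Fin (n + 1) → P) (p : P) (a : GrpAlg G) :
    bd θ (n + 1) (hF (single b (single p a))) + hF (bd θ n (single b (single p a))) =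
      single b (single p a) := by
  rw [hF_single_single, bd_single, bd_single, single_smulF_dBasis, single_smulF_dBasis]
  change _ + hFHom _ = _
  simp only [map_add, map_sum, map_zsmul (hFHom (P := P) (G := G))]
  simp only [hFHom, AddMonoidHom.mk'_apply, hF_single_single]
  rw [Fin.sum_univ_succ]
  simp only [Fin.cons_succ, Fin.cons_zero, one_mul, init_cons, merge_cons_zero, merge_cons_succ,
    Fin.val_zero, Fin.val_succ, pow_succ, pow_zero, mul_neg_one, neg_smul, neg_neg,
    Finset.sum_neg_distrib]
  abel1

lemma bd_hF_add_hNeg_bdNeg (x : FreeMod P G 0) : bd θ 0 (hF x) + hNeg (bdNeg x) = x :=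
  DFunLike.congr_fun
    (FreeMod.addHom_ext (f := (bdHom θ 0).comp hFHom + hNegHom.comp bdNegHom)
      (g := .id _) (bd_hF_add_hNeg_bdNeg_single θ)) x

lemma bd_hF_add_hF_bd (n : ℕ) (x : FreeMod P G (n + 1)) :
    bd θ (n + 1) (hF x) + hF (bd θ n x) = x :=
  DFunLike.congr_fun
    (FreeMod.addHom_ext (f := (bdHom θ (n + 1)).comp hFHom + hFHom.comp (bdHom θ n))
      (g := .id _) (bd_hF_add_hF_bd_single θ n)) x

end BarResolution

open BarResolution in
theorem bar_contracting_homotopy_general {P : Type*} [Monoid P] {G : Type*} [CommGroup G]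
    (θ : P →* Monoid.End G) :
    (∀ a : GrpAlg G, bdNeg (hNeg (P := P) a) = a) ∧
    (∀ x : FreeMod P G 0, bd θ 0 (hF x) + hNeg (bdNeg x) = x) ∧
    (∀ (n : ℕ) (x : FreeMod P G (n + 1)), bd θ (n + 1) (hF x) + hF (bd θ n x) = x) :=
  ⟨bdNeg_hNeg, bd_hF_add_hNeg_bdNeg θ, bd_hF_add_hF_bd θ⟩

open BarResolution in
/-- The maps `h₋₁(a) = a[ ]`, `h₀(a𝟙_p[ ]) = a[p]`, and
`hₙ(a𝟙_{p₀}[p₁,…,pₙ]) = a[p₀,p₁,…,pₙ]` form a contracting homotopy for the bar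
resolution of the module `𝔐 = ℤG` over the skew product ring `𝔑 = ℤG ⋊_θ P`:
`∂₋₁ h₋₁ = id` on `𝔐` and `∂ₙ hₙ + hₙ₋₁ ∂ₙ₋₁ = id` on `𝔉ₙ` for all `n ≥ 0`;
in particular the resolution is exact. -/
theorem bar_contracting_homotopy {P : Type*} [Monoid P] {G : Type*} [CommGroup G]
    [Countable G] (θ : P →* Monoid.End G)
    (hinj : ∀ p : P, Function.Injective (θ p)) :
    (∀ a : GrpAlg G, bdNeg (hNeg (P := P) a) = a) ∧
    (∀ x : FreeMod P G 0, bd θ 0 (hF x) + hNeg (bdNeg x) = x) ∧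
    (∀ (n : ℕ) (x : FreeMod P G (n + 1)), bd θ (n + 1) (hF x) + hF (bd θ n x) = x) :=
  bar_contracting_homotopy_general θ
end

section
/- Under relations (QX1)–(QX3), for all m,n ∈ ℕ× the range projections satisfy s_m s_m* · s_n s_n* = s_{m∨n} s_{m∨n}*, where m∨n is the least common multiple of m and n. -/
/-!
The typeclasses on `A` do not make `star` conjugate-linear (`ℂ` with the trivial involution is a
C⋆-ring and a normed `ℂ`-algebra), so this is first forced by (QX3) for `m = 2`: the element
`d = i + star i` is central and self-adjoint, `star` is `ℂ`-linear on `d A`, and for the projection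
`e = s₂ s₂*`, which satisfies `e u e = 0`, the C⋆-identity kills `d (e + i u e)`; hence `d e = 0`
and `d = 0`. From then on `A` is a C⋆-algebra.

Conjugating (QX3) for `a` by `s_m`, using (QX2) and (QX1), gives
`s_m s_m* = ∑_{k < a} u^{mk} s_{ma} s_{ma}* u^{-mk}`. For `L = lcm(m, n) = m a = n b` the
projections `u^i s_L s_L* u^{-i}`, `i < L`, sum to `1` and are therefore pairwise orthogonal, so the
product of the two sums is the sum over the common multiples of `m` and `n` below `L`, i.e. the
single term `i = 0`.
-/

open Complex

theorem isStarProjection_mul_star_of_star_mul_self {R : Type*} [Monoid R] [StarMul R] {v : R}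
    (hv : star v * v = 1) : IsStarProjection (v * star v) :=
  ⟨by rw [IsIdempotentElem, mul_assoc, ← mul_assoc (star v), hv, one_mul], .mul_star_self v⟩

section StarModule

section Ring

variable {A : Type*} [Ring A] [StarRing A] [Algebra ℂ A]

theorem algebraMap_I_add_star_mul_comm (x : A) :
    (algebraMap ℂ A I + star (algebraMap ℂ A I)) * x =
      x * (algebraMap ℂ A I + star (algebraMap ℂ A I)) := by
  have hι : ∀ y, algebraMap ℂ A I * y = y * algebraMap ℂ A I := Algebra.commutes I
  have hj : star (algebraMap ℂ A I) * x = x * star (algebraMap ℂ A I) := by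
    simpa using (congrArg star (hι (star x))).symm
  rw [add_mul, mul_add, hι, hj]

theorem algebraMap_I_add_star_mul_star_smul (x : A) :
    (algebraMap ℂ A I + star (algebraMap ℂ A I)) * star (I • x) =
      I • ((algebraMap ℂ A I + star (algebraMap ℂ A I)) * star x) := by
  set ι := algebraMap ℂ A I
  have hιι : ι * ι = -1 := by simp [ι, ← map_mul]
  have hjj : star ι * star ι = -1 := by simp [← star_mul, hιι]
  have hdj : (ι + star ι) * star ι = ι * (ι + star ι) := by
    rw [add_mul, mul_add, hjj, hιι, add_comm]
  calc (ι + star ι) * star (I • x) = star x * ((ι + star ι) * star ι) := by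
        rw [Algebra.smul_def, star_mul, ← mul_assoc, algebraMap_I_add_star_mul_comm, mul_assoc]
    _ = I • ((ι + star ι) * star x) := by
        rw [hdj, ← mul_assoc, ← Algebra.commutes, mul_assoc, ← algebraMap_I_add_star_mul_comm,
          Algebra.smul_def]

end Ring

variable {A : Type*} [NormedRing A] [StarRing A] [CStarRing A]

theorem eq_zero_of_mul_star_I_smul [Algebra ℂ A] {d u v : A} (hd : ∀ x, d * x = x * d)
    (hdstar : star d = d) (hlin : ∀ x, d * star (I • x) = I • (d * star x))
    (hu : star u * u = 1) (hv : star v * v = 1)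
    (hsum : v * star v + u * (v * star v) * star u = 1) : d = 0 := by
  have he := isStarProjection_mul_star_of_star_mul_self hv
  have hev : v * star v * v = v := by rw [mul_assoc, hv, mul_one]
  set e := v * star v
  have hestar : star e = e := he.isSelfAdjoint.star_eq
  have hee : e * e = e := he.isIdempotentElem.eq
  clear_value e
  have heue : e * u * e = 0 := by
    have hf : u * e * star u = 1 - e := by rw [← hsum]; abel
    calc e * u * e = e * (u * e * star u) * u := by simp only [mul_assoc, hu, mul_one]
      _ = 0 := by rw [hf, mul_sub, mul_one, hee, sub_self, zero_mul]
  have heu'e : e * star u * e = 0 := by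
    simpa [hestar, mul_assoc] using congrArg star heue
  set z := e + I • (u * e)
  have hz : (e + I • (e * star u)) * z = 0 := by
    simp only [z, add_mul, mul_add, smul_mul_assoc, mul_smul_comm, hee]
    simp only [mul_assoc] at heue heu'e ⊢
    rw [← mul_assoc (star u), hu, one_mul, hee, heue, heu'e]
    simp [smul_smul]
  have hy : star (d * z) * (d * z) = 0 := by
    have hdz : d * star z = d * (e + I • (e * star u)) := by
      simp [z, mul_add, hlin, hestar]
    calc star (d * z) * (d * z) = d * ((d * star z) * z) := by
          rw [star_mul, hdstar, ← hd, ← mul_assoc, mul_assoc d, ← hd, mul_assoc, mul_assoc]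
      _ = 0 := by rw [hdz, mul_assoc, hz, mul_zero, mul_zero]
  have hde : d * e = 0 := by
    have hy0 : d * e = -(I • (d * (u * e))) :=
      eq_neg_of_add_eq_zero_left (by simpa [z, mul_add] using
        (CStarRing.star_mul_self_eq_zero_iff _).mp hy)
    calc d * e = e * (d * e) := by rw [← mul_assoc, ← hd, mul_assoc, hee]
      _ = 0 := by
        rw [hy0, mul_neg, mul_smul_comm, ← mul_assoc, ← hd, mul_assoc, ← mul_assoc e, heue]
        simp
  calc d = star v * (d * e * v) := by
        rw [mul_assoc, hev, ← mul_assoc, ← hd, mul_assoc, hv, mul_one]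
    _ = 0 := by rw [hde, zero_mul, mul_zero]

theorem star_algebraMap_I_of_isometry [Algebra ℂ A] {u v : A} (hu : star u * u = 1)
    (hv : star v * v = 1) (hsum : v * star v + u * (v * star v) * star u = 1) :
    star (algebraMap ℂ A I) = -algebraMap ℂ A I :=
  eq_neg_of_add_eq_zero_right <| eq_zero_of_mul_star_I_smul algebraMap_I_add_star_mul_comm
    (by rw [star_add, star_star, add_comm]) algebraMap_I_add_star_mul_star_smul hu hv hsum

theorem star_algebraMap_ofReal {A : Type*} [NormedRing A] [StarRing A] [ContinuousStar A]
    [NormedAlgebra ℂ A] (r : ℝ) :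
    star (algebraMap ℂ A r) = algebraMap ℂ A r := by
  simpa [Algebra.algebraMap_eq_smul_one, Complex.coe_smul] using
    map_real_smul (starAddEquiv : A ≃+ A) continuous_star r 1

theorem starModule_of_star_algebraMap_I [NormedAlgebra ℂ A]
    (h : star (algebraMap ℂ A I) = -algebraMap ℂ A I) : StarModule ℂ A where
  star_smul z a := by
    have hz : star (algebraMap ℂ A z) = algebraMap ℂ A (star z) := by
      obtain ⟨x, y, rfl⟩ : ∃ x y : ℝ, z = x + y * I := ⟨z.re, z.im, (re_add_im z).symm⟩
      simp only [map_add, map_mul, star_add, star_mul, star_algebraMap_ofReal, h, star_def,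
        conj_ofReal, conj_I, map_neg, neg_mul]
    rw [Algebra.smul_def, star_mul, hz, ← Algebra.commutes, ← Algebra.smul_def]

end StarModule

theorem IsStarProjection.mul_eq_zero_of_sum_eq_one {A ι : Type*} [NormedRing A] [StarRing A]
    [CStarRing A] [PartialOrder A] [StarOrderedRing A] {p : ι → A} {s : Finset ι}
    (hp : ∀ i ∈ s, IsStarProjection (p i)) (hsum : ∑ i ∈ s, p i = 1) {i j : ι}
    (hi : i ∈ s) (hj : j ∈ s) (hij : i ≠ j) : p i * p j = 0 := by
  classical
  have hsq : ∀ k ∈ s, p i * p k * p i = star (p k * p i) * (p k * p i) := fun k hk => by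
    rw [star_mul, (hp i hi).isSelfAdjoint.star_eq, (hp k hk).isSelfAdjoint.star_eq]
    conv_rhs => rw [← mul_assoc, mul_assoc (p i), (hp k hk).isIdempotentElem.eq]
  have hrest : ∑ k ∈ s.erase i, p i * p k * p i = 0 := by
    have htot : ∑ k ∈ s, p i * p k * p i = p i := by
      rw [← Finset.sum_mul, ← Finset.mul_sum, hsum, mul_one, (hp i hi).isIdempotentElem.eq]
    rw [← Finset.add_sum_erase s _ hi, (hp i hi).isIdempotentElem.eq,
      (hp i hi).isIdempotentElem.eq] at htot
    exact add_eq_left.mp htot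
  have hji : star (p j * p i) * (p j * p i) = 0 := by
    rw [← hsq j hj]
    refine (Finset.sum_eq_zero_iff_of_nonneg fun k hk => ?_).mp hrest j
      (Finset.mem_erase.mpr ⟨hij.symm, hj⟩)
    rw [hsq k (Finset.mem_of_mem_erase hk)]
    exact star_mul_self_nonneg _
  simpa [(hp i hi).isSelfAdjoint.star_eq, (hp j hj).isSelfAdjoint.star_eq] using
    congrArg star ((CStarRing.star_mul_self_eq_zero_iff _).mp hji)

theorem Finset.sum_mul_sum_eq_sum_inter {R ι : Type*} [NonUnitalSemiring R] [DecidableEq ι]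
    {p : ι → R} {s t : Finset ι} (hidem : ∀ i ∈ s ∩ t, IsIdempotentElem (p i))
    (horth : ∀ i ∈ s, ∀ j ∈ t, i ≠ j → p i * p j = 0) :
    (∑ i ∈ s, p i) * ∑ j ∈ t, p j = ∑ i ∈ s ∩ t, p i := by
  rw [Finset.sum_mul, ← Finset.sum_ite_mem]
  refine Finset.sum_congr rfl fun i hi => ?_
  rw [Finset.mul_sum]
  split_ifs with hit
  · rw [Finset.sum_eq_single_of_mem i hit fun j hj hji => horth i hi j hj hji.symm,
      (hidem i (Finset.mem_inter.mpr ⟨hi, hit⟩)).eq]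
  · exact Finset.sum_eq_zero fun j hj => horth i hi j hj (ne_of_mem_of_not_mem hj hit).symm

theorem Nat.image_mul_range_inter_image_mul_range {m n a b : ℕ} (ha : m * a = m.lcm n)
    (hb : n * b = m.lcm n) (ha0 : 0 < a) (hb0 : 0 < b) :
    (Finset.range a).image (m * ·) ∩ (Finset.range b).image (n * ·) = {0} := by
  ext i
  simp only [Finset.mem_inter, Finset.mem_image, Finset.mem_range, Finset.mem_singleton]
  constructor
  · rintro ⟨⟨k, hk, rfl⟩, ⟨j, -, hj⟩⟩
    rcases Nat.eq_zero_or_pos m with rfl | hm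
    · simp
    refine Nat.eq_zero_of_dvd_of_lt (Nat.lcm_dvd (dvd_mul_right m k) ⟨j, hj.symm⟩) ?_
    rw [← ha]
    exact Nat.mul_lt_mul_of_pos_left hk hm
  · rintro rfl
    exact ⟨⟨0, ha0, mul_zero m⟩, ⟨0, hb0, mul_zero n⟩⟩

theorem IsStarProjection.sum_range_mul_mul_sum_range_mul {A : Type*} [NormedRing A]
    [StarRing A] [CStarRing A] [PartialOrder A] [StarOrderedRing A] {p : ℕ → A} {m n a b : ℕ}
    (hp : ∀ i < m.lcm n, IsStarProjection (p i)) (hsum : ∑ i ∈ Finset.range (m.lcm n), p i = 1)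
    (ha : m * a = m.lcm n) (hb : n * b = m.lcm n) (hL : 0 < m.lcm n) :
    (∑ k ∈ Finset.range a, p (m * k)) * ∑ k ∈ Finset.range b, p (n * k) = p 0 := by
  have hm : 0 < m := Nat.pos_of_ne_zero fun h => by simp [h] at hL
  have hn : 0 < n := Nat.pos_of_ne_zero fun h => by simp [h] at hL
  have ha0 : 0 < a := Nat.pos_of_ne_zero fun h => by simp [h] at ha; omega
  have hb0 : 0 < b := Nat.pos_of_ne_zero fun h => by simp [h] at hb; omega
  have hsub : ∀ {c d}, 0 < c → c * d = m.lcm n →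
      (Finset.range d).image (c * ·) ⊆ Finset.range (m.lcm n) := by
    intro c d hc hcd
    simpa [Finset.subset_iff, ← hcd] using fun k hk => Nat.mul_lt_mul_of_pos_left hk hc
  have hp' : ∀ i ∈ Finset.range (m.lcm n), IsStarProjection (p i) := fun i hi =>
    hp i (Finset.mem_range.mp hi)
  rw [← Finset.sum_image (f := p) fun _ _ _ _ h => Nat.eq_of_mul_eq_mul_left hm h,
    ← Finset.sum_image (f := p) fun _ _ _ _ h => Nat.eq_of_mul_eq_mul_left hn h,
    Finset.sum_mul_sum_eq_sum_inter
      (fun i hi => (hp' i (hsub hm ha (Finset.mem_inter.mp hi).1)).isIdempotentElem)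
      (fun i hi j hj hij => IsStarProjection.mul_eq_zero_of_sum_eq_one hp' hsum
        (hsub hm ha hi) (hsub hn hb hj) hij),
    Nat.image_mul_range_inter_image_mul_range ha hb ha0 hb0, Finset.sum_singleton]

section Conjugation

variable {A : Type*} [Ring A] [StarRing A] [Algebra ℂ A]

open Unitary

theorem Unitary.conjStarAlgAut_zpow_apply (U : unitary A) (k : ℤ) (x : A) :
    conjStarAlgAut ℂ A (U ^ k) x = (U ^ k : unitary A) * x * (U ^ (-k) : unitary A) := by
  rw [conjStarAlgAut_apply, zpow_neg, ← Unitary.star_eq_inv, Unitary.coe_star]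

theorem mul_conjStarAlgAut_zpow_mul_star {x : A} {n : ℤ} (U : unitary A)
    (hx : ∀ l : ℤ, x * (U ^ l : unitary A) = (U ^ (n * l) : unitary A) * x) (l : ℤ) (y : A) :
    x * conjStarAlgAut ℂ A (U ^ l) y * star x =
      conjStarAlgAut ℂ A (U ^ (n * l)) (x * y * star x) := by
  have hx' : star ((U ^ l : unitary A) : A) * star x =
      star x * star ((U ^ (n * l) : unitary A) : A) := by
    simpa only [star_mul] using congrArg star (hx l)
  simp only [conjStarAlgAut_apply]
  calc x * (↑(U ^ l) * y * star ↑(U ^ l)) * star x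
      = (x * ↑(U ^ l)) * y * (star ↑(U ^ l) * star x) := by simp only [mul_assoc]
    _ = _ := by rw [hx l, hx']; simp only [mul_assoc]

theorem mul_star_eq_sum_conjStarAlgAut {x y : A} {n : ℤ} {a : ℕ} (U : unitary A)
    (hx : ∀ l : ℤ, x * (U ^ l : unitary A) = (U ^ (n * l) : unitary A) * x)
    (hy : ∑ k ∈ Finset.range a, conjStarAlgAut ℂ A (U ^ (k : ℤ)) (y * star y) = 1) :
    x * star x =
      ∑ k ∈ Finset.range a, conjStarAlgAut ℂ A (U ^ (n * k)) (x * (y * star y) * star x) := by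
  calc x * star x
      = x * (∑ k ∈ Finset.range a, conjStarAlgAut ℂ A (U ^ (k : ℤ)) (y * star y)) * star x := by
        rw [hy, mul_one]
    _ = _ := by
        simp only [Finset.mul_sum, Finset.sum_mul, mul_conjStarAlgAut_zpow_mul_star U hx]

theorem mul_mul_star_mul_star_of_mul_eq_smul [StarModule ℂ A] {x y w : A} {c : ℂ}
    (hc : ‖c‖ = 1) (h : x * y = c • w) : x * (y * star y) * star x = w * star w := by
  calc x * (y * star y) * star x = (x * y) * star (x * y) := by simp only [star_mul, mul_assoc]
    _ = w * star w := by
      rw [h, star_smul, smul_mul_smul_comm, Complex.star_def, Complex.mul_conj,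
        Complex.normSq_eq_norm_sq, hc]
      simp

end Conjugation

/-- Under relations (QX1)–(QX3) of `Q_ℕ^ξ`, the range projections of the
isometries satisfy `s_m s_m* · s_n s_n* = s_{m∨n} s_{m∨n}*` where `m∨n = lcm(m,n)`. -/
theorem twisted_QN_range_projections_lcm
    {A : Type*} [NormedRing A] [StarRing A] [CStarRing A] [CompleteSpace A]
    [NormedAlgebra ℂ A] (U : unitary A) (s : ℕ+ → A) (ξ : ℕ+ → ℕ+ → ℝ)
    (hisom : ∀ m, star (s m) * s m = 1)
    (hQX1 : ∀ m n, s m * s n = Complex.exp (Complex.I * (ξ m n : ℂ)) • s (m * n))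
    (hQX2 : ∀ (m : ℕ+) (l : ℤ), s m * ((U ^ l : unitary A) : A) =
      ((U ^ ((m : ℤ) * l) : unitary A) : A) * s m)
    (hQX3 : ∀ m : ℕ+, ∑ k ∈ Finset.range m,
      ((U ^ (k : ℤ) : unitary A) : A) * (s m * star (s m)) * ((U ^ (-(k : ℤ)) : unitary A) : A) = 1) :
    ∀ m n : ℕ+,
      (s m * star (s m)) * (s n * star (s n)) = s (m.lcm n) * star (s (m.lcm n)) := by
  have hsum2 : s 2 * star (s 2) + U * (s 2 * star (s 2)) * star (U : A) = 1 := by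
    simpa [Finset.sum_range_succ, zpow_neg, ← Unitary.star_eq_inv] using hQX3 2
  have := starModule_of_star_algebraMap_I
    (star_algebraMap_I_of_isometry (Unitary.star_mul_self_of_mem U.prop) (hisom 2) hsum2)
  let _ : CStarAlgebra A := {}
  let _ : PartialOrder A := CStarAlgebra.spectralOrder A
  have := CStarAlgebra.spectralOrderedRing A
  have hsum (m : ℕ+) : ∑ k ∈ Finset.range m,
      Unitary.conjStarAlgAut ℂ A (U ^ (k : ℤ)) (s m * star (s m)) = 1 := by
    simpa only [Unitary.conjStarAlgAut_zpow_apply] using hQX3 m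
  have hdecomp (m a : ℕ+) : s m * star (s m) = ∑ k ∈ Finset.range a,
      Unitary.conjStarAlgAut ℂ A (U ^ ((m * k : ℕ) : ℤ)) (s (m * a) * star (s (m * a))) := by
    rw [mul_star_eq_sum_conjStarAlgAut U (hQX2 m) (hsum a),
      mul_mul_star_mul_star_of_mul_eq_smul (norm_exp_I_mul_ofReal _) (hQX1 m a)]
    push_cast; rfl
  intro m n
  obtain ⟨a, ha⟩ := PNat.dvd_lcm_left m n
  obtain ⟨b, hb⟩ := PNat.dvd_lcm_right m n
  have hlcm : ((m.lcm n : ℕ+) : ℕ) = Nat.lcm m n := PNat.lcm_coe m n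
  rw [hdecomp m a, hdecomp n b, ← ha, ← hb]
  have hPL := isStarProjection_mul_star_of_star_mul_self (hisom (m.lcm n))
  have key := IsStarProjection.sum_range_mul_mul_sum_range_mul
    (p := fun i : ℕ =>
      Unitary.conjStarAlgAut ℂ A (U ^ (i : ℤ)) (s (m.lcm n) * star (s (m.lcm n))))
    (fun i _ => hPL.map _) (hlcm ▸ hsum (m.lcm n)) (by rw [← hlcm, ha, PNat.mul_coe])
    (by rw [← hlcm, hb, PNat.mul_coe]) (hlcm ▸ (m.lcm n).pos)
  simpa using key
end

section
/- The combinatorial heart of Lemma 5.2: for m,n ∈ ℕ× and k,l ∈ ℤ, the projection inequality u^k s_m s_m* u^{-k} ≤ u^l s_n s_n* u^{-l} holds if and only if for every j ∈ {0,…,n−1} there exists j' ∈ {0,…,m−1} such that k + jm ≡ l + j'n (mod mn). Moreover this congruence condition is equivalent to: n divides m and n divides k − l. -/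
/-!
Modulo `mn`, the residues `j' n` with `j' < m` are exactly the multiples of `n`, so the condition
says that `n ∣ k - l + j m` for every `j < n`. Taking `j = 0` and `j = 1` gives `n ∣ k - l` and
`n ∣ m`; conversely these two make every `k - l + j m` a multiple of `n`.
-/

namespace Int

theorem exists_lt_modEq_mul_iff_dvd {m : ℕ} (hm : 0 < m) (n x : ℤ) :
    (∃ j : ℕ, j < m ∧ x ≡ j * n [ZMOD m * n]) ↔ n ∣ x := by
  constructor
  · rintro ⟨j, -, hx⟩
    exact modEq_zero_iff_dvd.1 ((hx.of_mul_left _).trans (modEq_zero_iff_dvd.2 (dvd_mul_left n j)))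
  · rintro ⟨c, rfl⟩
    have hm' : (0 : ℤ) < m := by exact_mod_cast hm
    have hc : 0 ≤ c % m := emod_nonneg c hm'.ne'
    refine ⟨(c % m).toNat, by have := emod_lt_of_pos c hm'; omega, ?_⟩
    rw [toNat_of_nonneg hc, mul_comm n c]
    exact (mod_modEq c m).symm.mul_right'

theorem forall_lt_dvd_add_mul_iff {n : ℕ} (hn : 0 < n) (d m : ℤ) :
    (∀ j : ℕ, j < n → (n : ℤ) ∣ d + j * m) ↔ (n : ℤ) ∣ m ∧ (n : ℤ) ∣ d := by
  constructor
  · intro h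
    have hd : (n : ℤ) ∣ d := by simpa using h 0 hn
    refine ⟨?_, hd⟩
    rcases Nat.lt_or_ge 1 n with h1 | h1
    · simpa using (dvd_add_right hd).1 (h 1 h1)
    · rw [show n = 1 by omega]
      exact one_dvd m
  · rintro ⟨hm, hd⟩ j -
    exact dvd_add hd (dvd_mul_of_dvd_right hm)

end Int

/-- Combinatorial heart of Lemma 5.2. For positive integers `m, n` and
integers `k, l`: for every `j ∈ {0,…,n−1}` there exists `j' ∈ {0,…,m−1}` with
`k + jm ≡ l + j'n (mod mn)`, if and only if `n` divides both `m` and `k − l`. -/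
theorem projection_inequality_congruence (m n : ℕ) (hm : 0 < m) (hn : 0 < n)
    (k l : ℤ) :
    (∀ j : ℕ, j < n → ∃ j' : ℕ, j' < m ∧
        k + (j : ℤ) * m ≡ l + (j' : ℤ) * n [ZMOD (m * n)]) ↔
      (n : ℤ) ∣ (m : ℤ) ∧ (n : ℤ) ∣ (k - l) := by
  have shift : ∀ j j' : ℕ, (k + (j : ℤ) * m ≡ l + (j' : ℤ) * n [ZMOD (m * n)]) ↔
      (k - l + (j : ℤ) * m ≡ (j' : ℤ) * n [ZMOD (m * n)]) := by
    intro j j'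
    simp only [Int.modEq_iff_dvd]
    ring_nf
  simp_rw [shift, Int.exists_lt_modEq_mul_iff_dvd hm]
  exact Int.forall_lt_dvd_add_mul_iff hn (k - l) m
end
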